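/- Let R be a nontrivial commutative ring whose only idempotent elements are 0 and 1, and let D be an abelian group. Then the group-like elements of the group algebra R[D] = AddMonoidAlgebra R D are exactly the basis elements χ^d for d ∈ D: an element α ∈ R[D] satisfies α ≠ 0 and Δ(α) = α ⊗ α (where Δ: R[D] → R[D] ⊗_R R[D] is the comultiplication with Δ(χ^d) = χ^d ⊗ χ^d) if and only if α = χ^d for some d ∈ D. -/

import Mathlib

open scoped TensorProduct

/-!
In the basis `χ^d`, the comultiplication sends `α = ∑ a_d χ^d` to the diagonal tensor
`∑ a_d χ^d ⊗ χ^d`, while `α ⊗ α = ∑ a_d a_e χ^d ⊗ χ^e`. Comparing coefficients, `Δ α = α ⊗ α`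
says exactly that the coefficients `a_d` are pairwise orthogonal idempotents. In a connected
ring each `a_d` is `0` or `1`, and two of them cannot both be `1`, so a nonzero group-like
element is a single basis vector.
-/

namespace Finsupp

variable {ι R : Type*} [DecidableEq ι] [Semiring R]

theorem exists_eq_single_one_of_orthogonal_idempotents
    (hidem : ∀ e : R, IsIdempotentElem e → e = 0 ∨ e = 1) {f : ι →₀ R} (hf : f ≠ 0)
    (horth : ∀ i j, f i * f j = if i = j then f i else 0) : ∃ i, f = single i 1 := by
  obtain ⟨i, hi⟩ : ∃ i, f i ≠ 0 := by simpa [Finsupp.ext_iff] using hf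
  have hi_idem : f i * f i = f i := by simpa using horth i i
  have hi_one : f i = 1 := (hidem (f i) hi_idem).resolve_left hi
  refine ⟨i, Finsupp.ext fun j => ?_⟩
  by_cases hij : i = j
  · simp [← hij, hi_one]
  · simpa [hi_one, hij, Finsupp.single_apply, eq_comm] using horth i j

end Finsupp

namespace Module.Basis

variable {ι R M : Type*} [DecidableEq ι] [CommSemiring R] [AddCommMonoid M] [Module R M]
  (b : Basis ι R M) {Δ : M →ₗ[R] M ⊗[R] M}

theorem tensorProduct_repr_apply_of_apply_eq_tmul_self (hΔ : ∀ i, Δ (b i) = b i ⊗ₜ b i)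
    (x : M) (i j : ι) :
    (b.tensorProduct b).repr (Δ x) (i, j) = if i = j then b.repr x i else 0 := by
  have hlin : Finsupp.lapply (i, j) ∘ₗ (b.tensorProduct b).repr.toLinearMap ∘ₗ Δ =
      if i = j then b.coord i else 0 := by
    refine b.ext fun k => ?_
    split_ifs with hij
    · simp [hΔ, ← Basis.tensorProduct_apply, Finsupp.single_apply, hij, eq_comm]
    · have hkk : (k, k) ≠ (i, j) := fun h => hij (by grind)
      simp [hΔ, ← Basis.tensorProduct_apply, hkk]
  simpa [apply_ite (fun g : M →ₗ[R] R => g x)] using LinearMap.congr_fun hlin x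

theorem repr_mul_repr_of_apply_eq_tmul_self (hΔ : ∀ i, Δ (b i) = b i ⊗ₜ b i) {x : M}
    (hx : Δ x = x ⊗ₜ x) (i j : ι) :
    b.repr x i * b.repr x j = if i = j then b.repr x i else 0 := by
  rw [← b.tensorProduct_repr_apply_of_apply_eq_tmul_self hΔ, hx,
    Basis.tensorProduct_repr_tmul_apply, smul_eq_mul, mul_comm]

theorem ne_zero_and_apply_eq_tmul_self_iff [Nontrivial R]
    (hidem : ∀ e : R, IsIdempotentElem e → e = 0 ∨ e = 1) (hΔ : ∀ i, Δ (b i) = b i ⊗ₜ b i)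
    (x : M) : (x ≠ 0 ∧ Δ x = x ⊗ₜ x) ↔ ∃ i, x = b i := by
  constructor
  · rintro ⟨hx0, hx⟩
    obtain ⟨i, hi⟩ := Finsupp.exists_eq_single_one_of_orthogonal_idempotents hidem
      (by simpa using hx0) (b.repr_mul_repr_of_apply_eq_tmul_self hΔ hx)
    exact ⟨i, b.repr.injective (by simpa using hi)⟩
  · rintro ⟨i, rfl⟩
    exact ⟨b.ne_zero i, hΔ i⟩

end Module.Basis

theorem stmt_14 {R D : Type*} [CommRing R] [Nontrivial R]
    (hidem : ∀ e : R, e * e = e → e = 0 ∨ e = 1)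
    (Δ : AddMonoidAlgebra R D →ₗ[R] AddMonoidAlgebra R D ⊗[R] AddMonoidAlgebra R D)
    (hΔ : ∀ d : D, Δ (AddMonoidAlgebra.single d 1) =
      AddMonoidAlgebra.single d (1 : R) ⊗ₜ AddMonoidAlgebra.single d (1 : R)) :
    ∀ α : AddMonoidAlgebra R D,
      (α ≠ 0 ∧ Δ α = α ⊗ₜ α) ↔ ∃ d : D, α = AddMonoidAlgebra.single d 1 := by
  classical
  exact (AddMonoidAlgebra.basis D R).ne_zero_and_apply_eq_tmul_self_iff hidem hΔ
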